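/- arXiv:1307.1250 — 3 statements merged into one kernel-verified Lean document; each statement's English description precedes it below -/
import Mathlib

section
/- Fix integers d ≥ 2 and n ≥ 1. The set V of tuples u ∈ (Z/dZ)^{n+1} with Σ u_i = −(n+1) that lie in some W_j = {u : u_j = −1} has cardinality (d^{n+1} + (−1)^{n+1} − (d−1)^{n+1})/d + (−1)^n. -/
open Finset

section aux
variable {d : ℕ} [NeZero d]

/-- number of nonzero-coordinate tuples of length k with sum 0 -/
def Ncard (d : ℕ) [NeZero d] (k : ℕ) : ℕ :=
  (univ.filter (fun v : Fin k → ZMod d => (∀ i, v i ≠ 0) ∧ ∑ i, v i = 0)).card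

lemma card_sum_eq (k : ℕ) (c : ZMod d) :
    (univ.filter (fun u : Fin (k+1) → ZMod d => ∑ i, u i = c)).card = d ^ k := by
  rw [← Fintype.card_subtype]
  have e : {u : Fin (k+1) → ZMod d // ∑ i, u i = c} ≃ (Fin k → ZMod d) :=
    { toFun := fun u => Fin.tail u.1
      invFun := fun w => ⟨Fin.cons (c - ∑ i, w i) w, by simp [Fin.sum_univ_succ]⟩
      left_inv := fun u => by
        have h0 : c - ∑ i, Fin.tail u.1 i = u.1 0 := by
          have := u.2
          rw [Fin.sum_univ_succ] at this
          simp [← this, Fin.tail]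
        ext1
        simp only [h0]
        exact Fin.cons_self_tail u.1
      right_inv := fun w => by
        simp [Fin.tail_cons] }
  rw [Fintype.card_congr e]
  simp [ZMod.card]

lemma card_nonzero (k : ℕ) :
    (univ.filter (fun v : Fin k → ZMod d => ∀ i, v i ≠ 0)).card = (d - 1) ^ k := by
  have h : (univ.filter (fun v : Fin k → ZMod d => ∀ i, v i ≠ 0))
      = Fintype.piFinset (fun _ : Fin k => univ.filter (· ≠ 0)) := by
    ext v; simp [Fintype.mem_piFinset]
  rw [h, Fintype.card_piFinset]
  have h2 : (univ.filter (fun x : ZMod d => x ≠ 0)).card = d - 1 := by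
    rw [Finset.filter_ne', Finset.card_erase_of_mem (mem_univ _)]
    simp [ZMod.card]
  simp [h2]

lemma Ncard_succ (k : ℕ) :
    Ncard d (k+1) + Ncard d k = (d - 1) ^ k := by
  classical
  have h1 : Ncard d (k+1)
      = (univ.filter (fun w : Fin k → ZMod d => (∀ i, w i ≠ 0) ∧ ∑ i, w i ≠ 0)).card := by
    unfold Ncard
    refine Finset.card_bij' (fun u _ => Fin.tail u) (fun w _ => Fin.cons (-∑ i, w i) w)
      ?hi ?hj ?li ?ri
    case hi =>
      intro u hu
      simp only [mem_filter, mem_univ, true_and] at hu ⊢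
      obtain ⟨hnz, hsum⟩ := hu
      rw [Fin.sum_univ_succ] at hsum
      refine ⟨fun i => hnz i.succ, fun h => ?_⟩
      have h' : ∑ i : Fin k, u i.succ = 0 := h
      rw [h', add_zero] at hsum
      exact hnz 0 hsum
    case hj =>
      intro w hw
      simp only [mem_filter, mem_univ, true_and] at hw ⊢
      obtain ⟨hnz, hsum⟩ := hw
      constructor
      · intro i
        refine Fin.cases ?_ ?_ i
        · simpa using hsum
        · intro j; simpa using hnz j
      · simp [Fin.sum_univ_succ]
    case li =>
      intro u hu
      simp only [mem_filter, mem_univ, true_and] at hu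
      have hsum := hu.2
      rw [Fin.sum_univ_succ] at hsum
      have h0 : -∑ i, Fin.tail u i = u 0 := by
        rw [show ∑ i, Fin.tail u i = ∑ i : Fin k, u i.succ from rfl]
        exact (eq_neg_of_add_eq_zero_left hsum).symm
      show Fin.cons (-∑ i, Fin.tail u i) (Fin.tail u) = u
      rw [h0]
      exact Fin.cons_self_tail u
    case ri =>
      intro w hw
      simp [Fin.tail_cons]
  rw [h1]
  unfold Ncard
  rw [← card_nonzero (d := d) k, ← Finset.card_union_of_disjoint]
  · congr 1
    ext w
    simp only [mem_union, mem_filter, mem_univ, true_and]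
    constructor
    · rintro (⟨h, _⟩ | ⟨h, _⟩) <;> exact h
    · intro h
      by_cases hs : ∑ i, w i = 0
      · right; exact ⟨h, hs⟩
      · left; exact ⟨h, hs⟩
  · rw [Finset.disjoint_filter]
    rintro w _ ⟨_, h⟩ ⟨_, h'⟩
    exact h h'

lemma Ncard_closed (hd : 2 ≤ d) (k : ℕ) :
    (d : ℤ) * Ncard d k = ((d : ℤ) - 1) ^ k + (-1) ^ k * ((d : ℤ) - 1) := by
  induction k with
  | zero =>
    have h : Ncard d 0 = 1 := by unfold Ncard; simp
    rw [h]; ring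
  | succ k ih =>
    have h := Ncard_succ (d := d) k
    have h' : (Ncard d (k+1) : ℤ) + Ncard d k = ((d : ℤ) - 1) ^ k := by
      have h2 := congrArg (fun x : ℕ => (x : ℤ)) h
      push_cast [Nat.cast_sub (by omega : 1 ≤ d)] at h2
      exact h2
    have heq : (Ncard d (k+1) : ℤ) = ((d : ℤ) - 1) ^ k - Ncard d k := by linarith
    rw [heq]
    linear_combination -ih
end aux

/-- The set of tuples `u ∈ (ℤ/dℤ)^(n+1)` with `∑ u i = -(n+1)` and `u j = -1` for some `j`
has cardinality `(d^(n+1) + (-1)^(n+1) - (d-1)^(n+1))/d + (-1)^n`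
(stated multiplied through by `d`). -/
theorem stmt_3 (d n : ℕ) [NeZero d] (hd : 2 ≤ d) (hn : 1 ≤ n) :
    ((Finset.univ.filter (fun u : Fin (n+1) → ZMod d =>
        (∑ i, u i) = -((n : ZMod d) + 1) ∧ ∃ j, u j = -1)).card : ℤ) * d
      = (d : ℤ) ^ (n+1) + (-1) ^ (n+1) - ((d : ℤ) - 1) ^ (n+1) + (-1) ^ n * d := by
  classical
  set c : ZMod d := -((n : ZMod d) + 1) with hc
  have hcomp : (univ.filter (fun u : Fin (n+1) → ZMod d =>
      (∑ i, u i) = c ∧ ∀ j, u j ≠ -1)).card = Ncard d (n+1) := by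
    unfold Ncard
    refine Finset.card_bij' (fun u _ => fun i => u i + 1) (fun v _ => fun i => v i - 1)
      ?hi ?hj ?li ?ri
    case hi =>
      intro u hu
      simp only [mem_filter, mem_univ, true_and] at hu ⊢
      obtain ⟨hsum, hne⟩ := hu
      refine ⟨fun i h => hne i (by linear_combination h), ?_⟩
      rw [Finset.sum_add_distrib, hsum]
      simp [hc]
    case hj =>
      intro v hv
      simp only [mem_filter, mem_univ, true_and] at hv ⊢
      obtain ⟨hnz, hsum⟩ := hv
      refine ⟨?_, fun j h => hnz j (by linear_combination h)⟩
      rw [Finset.sum_sub_distrib, hsum]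
      simp [hc]
    case li => intro u _; funext i; ring
    case ri => intro v _; funext i; ring
  have hsplit : (univ.filter (fun u : Fin (n+1) → ZMod d =>
        (∑ i, u i) = c ∧ ∃ j, u j = -1)).card
      + (univ.filter (fun u : Fin (n+1) → ZMod d =>
        (∑ i, u i) = c ∧ ∀ j, u j ≠ -1)).card = d ^ n := by
    rw [← card_sum_eq (d := d) n c, ← Finset.card_union_of_disjoint]
    · congr 1
      ext u
      simp only [mem_union, mem_filter, mem_univ, true_and]
      constructor
      · rintro (⟨h, _⟩ | ⟨h, _⟩) <;> exact h
      · intro h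
        by_cases hj : ∃ j, u j = -1
        · left; exact ⟨h, hj⟩
        · right; exact ⟨h, fun j hjj => hj ⟨j, hjj⟩⟩
    · rw [Finset.disjoint_filter]
      rintro u _ ⟨_, j, hj⟩ ⟨_, h'⟩
      exact h' j hj
  have hN := Ncard_closed (d := d) hd (n+1)
  rw [hcomp] at hsplit
  have h2 : ((univ.filter (fun u : Fin (n+1) → ZMod d =>
      (∑ i, u i) = c ∧ ∃ j, u j = -1)).card : ℤ)
      = (d : ℤ) ^ n - Ncard d (n+1) := by
    have h3 := congrArg (fun x : ℕ => (x : ℤ)) hsplit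
    push_cast at h3
    linarith
  rw [h2]
  linear_combination -hN
end

section
/- Let p be a prime, b ≥ 1, and let Φ, Φ̃, W be b×b matrices over an unramified extension Q_q of Q_p, with W invertible. Let δ ≥ 0 be an integer with ord_p(W) + ord_p(W^{−1}) ≥ −δ, and suppose ord_p(W Φ W^{−1}) ≥ 0 and ord_p(Φ − Φ̃) ≥ N for some integer N ≥ δ. Write det(1 − T·WΦW^{−1}) = 1 + Σ χ_i T^i and det(1 − T·WΦ̃W^{−1}) = 1 + Σ χ̃_i T^i, so that these equal det(1 − TΦ) and det(1 − TΦ̃) respectively. Then ord_p(χ_i − χ̃_i) ≥ N − δ for all 1 ≤ i ≤ b. -/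
open Polynomial

section AuxStmt12

variable {K : Type*} [NormedField K] [IsUltrametricDist K]

lemma aux_mul_coeff_le (P Q : Polynomial K) (C D : ℝ) (hC : 0 ≤ C) (hD : 0 ≤ D)
    (hp : ∀ m, ‖P.coeff m‖ ≤ C) (hq : ∀ m, ‖Q.coeff m‖ ≤ D) :
    ∀ m, ‖(P * Q).coeff m‖ ≤ C * D := by
  intro m
  rw [Polynomial.coeff_mul]
  apply IsUltrametricDist.norm_sum_le_of_forall_le_of_nonneg (mul_nonneg hC hD)
  intro x _
  rw [norm_mul]
  exact mul_le_mul (hp _) (hq _) (norm_nonneg _) hC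

lemma aux_prod_coeff_le {ι : Type*} (s : Finset ι) (f : ι → Polynomial K)
    (hf : ∀ k ∈ s, ∀ m, ‖(f k).coeff m‖ ≤ 1) :
    ∀ m, ‖(∏ k ∈ s, f k).coeff m‖ ≤ 1 := by
  induction s using Finset.cons_induction with
  | empty =>
    intro m
    rw [Finset.prod_empty, Polynomial.coeff_one]
    split <;> simp
  | cons a s ha ih =>
    intro m
    rw [Finset.prod_cons]
    have := aux_mul_coeff_le (f a) (∏ k ∈ s, f k) 1 1 zero_le_one zero_le_one
      (hf a (Finset.mem_cons_self a s))
      (ih (fun k hk => hf k (Finset.mem_cons_of_mem hk)))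
    simpa using this m

lemma aux_prod_diff_coeff_le {ι : Type*} (s : Finset ι) (f g : ι → Polynomial K)
    (ε : ℝ) (hε0 : 0 ≤ ε) (hε1 : ε ≤ 1)
    (hf : ∀ k ∈ s, ∀ m, ‖(f k).coeff m‖ ≤ 1) (hg : ∀ k ∈ s, ∀ m, ‖(g k).coeff m‖ ≤ 1)
    (hfg : ∀ k ∈ s, ∀ m, ‖((f k) - (g k)).coeff m‖ ≤ ε) :
    ∀ m, ‖((∏ k ∈ s, f k) - ∏ k ∈ s, g k).coeff m‖ ≤ ε := by
  induction s using Finset.cons_induction with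
  | empty => intro m; simp [hε0]
  | cons a s ha ih =>
    intro m
    rw [Finset.prod_cons, Finset.prod_cons]
    have hf' := fun k hk => hf k (Finset.mem_cons_of_mem hk)
    have hg' := fun k hk => hg k (Finset.mem_cons_of_mem hk)
    have hfg' := fun k hk => hfg k (Finset.mem_cons_of_mem hk)
    have key : f a * ∏ k ∈ s, f k - g a * ∏ k ∈ s, g k
        = f a * ((∏ k ∈ s, f k) - ∏ k ∈ s, g k) + (f a - g a) * ∏ k ∈ s, g k := by ring
    rw [key, Polynomial.coeff_add]
    refine (IsUltrametricDist.norm_add_le_max _ _).trans (max_le ?_ ?_)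
    · have := aux_mul_coeff_le (f a) _ 1 ε zero_le_one hε0
        (hf a (Finset.mem_cons_self a s)) (ih hf' hg' hfg') m
      simpa using this
    · have := aux_mul_coeff_le (f a - g a) _ ε 1 hε0 zero_le_one
        (hfg a (Finset.mem_cons_self a s)) (aux_prod_coeff_le s g hg') m
      simpa using this

lemma aux_norm_sub_le_max (x y : K) : ‖x - y‖ ≤ max ‖x‖ ‖y‖ := by
  rw [sub_eq_add_neg]
  simpa using IsUltrametricDist.norm_add_le_max x (-y)

lemma aux_entry_coeff_le {b : ℕ} (A : Matrix (Fin b) (Fin b) K)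
    (hA : ∀ i j, ‖A i j‖ ≤ 1) (i j : Fin b) (m : ℕ) :
    ‖(((1 : Matrix (Fin b) (Fin b) (Polynomial K)) - (X : Polynomial K) • A.map C) i j).coeff m‖
      ≤ 1 := by
  have heq : ((1 : Matrix (Fin b) (Fin b) (Polynomial K)) - (X : Polynomial K) • A.map C) i j
      = (if i = j then 1 else 0) - C (A i j) * X := by
    rw [Matrix.sub_apply, Matrix.smul_apply, Matrix.map_apply, Matrix.one_apply, smul_eq_mul,
      mul_comm]
  rw [heq, Polynomial.coeff_sub]
  refine (aux_norm_sub_le_max _ _).trans (max_le ?_ ?_)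
  · split_ifs with h
    · rw [Polynomial.coeff_one]
      split <;> simp
    · simp
  · rw [Polynomial.coeff_C_mul, Polynomial.coeff_X]
    split
    · rw [mul_one]; exact hA i j
    · simp

lemma aux_det_diff_coeff_le {b : ℕ} (A B : Matrix (Fin b) (Fin b) K) (ε : ℝ)
    (hε0 : 0 ≤ ε) (hε1 : ε ≤ 1)
    (hA : ∀ i j, ‖A i j‖ ≤ 1) (hB : ∀ i j, ‖B i j‖ ≤ 1)
    (hAB : ∀ i j, ‖(A - B) i j‖ ≤ ε) (m : ℕ) :
    ‖(Matrix.det ((1 : Matrix (Fin b) (Fin b) (Polynomial K)) - (X : Polynomial K) • A.map C)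
      - Matrix.det ((1 : Matrix (Fin b) (Fin b) (Polynomial K)) - (X : Polynomial K) • B.map C)).coeff m‖
      ≤ ε := by
  set M := (1 : Matrix (Fin b) (Fin b) (Polynomial K)) - (X : Polynomial K) • A.map C with hM
  set Nm := (1 : Matrix (Fin b) (Fin b) (Polynomial K)) - (X : Polynomial K) • B.map C with hN
  rw [Matrix.det_apply, Matrix.det_apply, ← Finset.sum_sub_distrib]
  rw [Polynomial.finset_sum_coeff]
  apply IsUltrametricDist.norm_sum_le_of_forall_le_of_nonneg hε0
  intro σ _
  have hsub : (Equiv.Perm.sign σ • ∏ i, M (σ i) i) - (Equiv.Perm.sign σ • ∏ i, Nm (σ i) i)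
      = Equiv.Perm.sign σ • ((∏ i, M (σ i) i) - ∏ i, Nm (σ i) i) := by
    rw [smul_sub]
  rw [hsub]
  have hdiff : ∀ m, ‖((∏ i, M (σ i) i) - ∏ i, Nm (σ i) i).coeff m‖ ≤ ε := by
    apply aux_prod_diff_coeff_le Finset.univ (fun i => M (σ i) i) (fun i => Nm (σ i) i) ε hε0 hε1
    · intro k _ m; exact aux_entry_coeff_le A hA _ _ m
    · intro k _ m; exact aux_entry_coeff_le B hB _ _ m
    · intro k _ m
      have hent : M (σ k) k - Nm (σ k) k = C ((B - A) (σ k) k) * X := by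
        simp only [hM, hN, Matrix.sub_apply, Matrix.smul_apply, Matrix.map_apply,
          smul_eq_mul, map_sub]
        ring
      rw [hent, Polynomial.coeff_C_mul, Polynomial.coeff_X]
      split
      · rw [mul_one]
        have hneg : (B - A) (σ k) k = -((A - B) (σ k) k) := by
          simp [Matrix.sub_apply]
        rw [hneg, norm_neg]
        exact hAB _ _
      · simp [hε0]
  rcases Int.units_eq_one_or (Equiv.Perm.sign σ) with h | h
  · rw [h, one_smul]; exact hdiff m
  · rw [h, Units.smul_def, Units.val_neg, Units.val_one, neg_smul, one_smul,
      Polynomial.coeff_neg, norm_neg]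
    exact hdiff m

end AuxStmt12

/-- Precision loss in the reverse characteristic polynomial.  `K` is a nonarchimedean
normed field containing `ℚ_q ⊇ ℚ_p` isometrically; `ord_p c ≥ v` is expressed as
`‖c‖ ≤ p^(-v)`.  If `ord_p(W) + ord_p(W⁻¹) ≥ -δ`, `ord_p(W Φ W⁻¹) ≥ 0` and
`ord_p(Φ - Φ̃) ≥ N ≥ δ`, then the coefficients of `det(1 - TΦ)` and `det(1 - TΦ̃)`
agree to valuation `N - δ`. -/
theorem stmt_12 (p : ℕ) [hfp : Fact p.Prime] (b : ℕ) (hb : 1 ≤ b)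
    (K : Type*) [NormedField K] [IsUltrametricDist K]
    (ι : ℚ_[p] →+* K) (hι : Isometry ι)
    (Φ Φt W : Matrix (Fin b) (Fin b) K) (hW : IsUnit W)
    (δ N : ℤ) (hδ : 0 ≤ δ) (hNδ : δ ≤ N)
    (hord : ∃ v₁ v₂ : ℤ, (∀ i j, ‖W i j‖ ≤ (p : ℝ) ^ (-v₁))
      ∧ (∀ i j, ‖W⁻¹ i j‖ ≤ (p : ℝ) ^ (-v₂)) ∧ -δ ≤ v₁ + v₂)
    (hWΦ : ∀ i j, ‖(W * Φ * W⁻¹) i j‖ ≤ 1)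
    (hdiff : ∀ i j, ‖(Φ - Φt) i j‖ ≤ (p : ℝ) ^ (-N)) :
    ∀ i : ℕ, 1 ≤ i → i ≤ b →
      ‖(Matrix.det ((1 : Matrix (Fin b) (Fin b) (Polynomial K))
            - (Polynomial.X : Polynomial K) • Φ.map Polynomial.C)).coeff i
        - (Matrix.det ((1 : Matrix (Fin b) (Fin b) (Polynomial K))
            - (Polynomial.X : Polynomial K) • Φt.map Polynomial.C)).coeff i‖
        ≤ (p : ℝ) ^ (-(N - δ)) := by
  obtain ⟨v₁, v₂, hW1, hW2, hv⟩ := hord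
  have hp1 : (1 : ℝ) ≤ (p : ℝ) := by exact_mod_cast hfp.out.one_lt.le
  have hp0 : (0 : ℝ) < (p : ℝ) := lt_of_lt_of_le zero_lt_one hp1
  set ε : ℝ := (p : ℝ) ^ (-(N - δ)) with hε
  have hε0 : 0 ≤ ε := (zpow_pos hp0 _).le
  have hε1 : ε ≤ 1 := zpow_le_one_of_nonpos₀ hp1 (by omega)
  have hWdet : IsUnit W.det := (Matrix.isUnit_iff_isUnit_det W).mp hW
  have h1 : W * W⁻¹ = 1 := Matrix.mul_nonsing_inv W hWdet
  -- conjugation invariance of the reverse charpoly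
  have hconj : ∀ M : Matrix (Fin b) (Fin b) K,
      Matrix.det ((1 : Matrix (Fin b) (Fin b) (Polynomial K)) - (X : Polynomial K) • M.map C)
      = Matrix.det ((1 : Matrix (Fin b) (Fin b) (Polynomial K))
          - (X : Polynomial K) • (W * M * W⁻¹).map C) := by
    intro M
    have hkey : (1 : Matrix (Fin b) (Fin b) (Polynomial K))
          - (X : Polynomial K) • (W * M * W⁻¹).map C
        = (W.map C) * ((1 : Matrix (Fin b) (Fin b) (Polynomial K))
          - (X : Polynomial K) • M.map C) * ((W⁻¹).map C) := by
      rw [Matrix.mul_sub, Matrix.sub_mul, Matrix.mul_one, Matrix.mul_smul, Matrix.smul_mul,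
        ← Matrix.map_mul, ← Matrix.map_mul, ← Matrix.map_mul, h1,
        Matrix.map_one C (map_zero C) (map_one C)]
    have hdet1 : ((W.map C : Matrix (Fin b) (Fin b) (Polynomial K))).det
        * ((W⁻¹).map C : Matrix (Fin b) (Fin b) (Polynomial K)).det = 1 := by
      rw [← Matrix.det_mul, ← Matrix.map_mul, h1, Matrix.map_one C (map_zero C) (map_one C),
        Matrix.det_one]
    rw [hkey, Matrix.det_mul, Matrix.det_mul, mul_right_comm, hdet1, one_mul]
  -- entrywise bound for the conjugated difference
  have hABdiff : ∀ i j, ‖((W * Φ * W⁻¹) - (W * Φt * W⁻¹)) i j‖ ≤ ε := by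
    intro i j
    have heq : (W * Φ * W⁻¹) - (W * Φt * W⁻¹) = W * (Φ - Φt) * W⁻¹ := by
      rw [Matrix.mul_sub, Matrix.sub_mul]
    rw [heq, Matrix.mul_apply]
    apply IsUltrametricDist.norm_sum_le_of_forall_le_of_nonneg hε0
    intro k _
    rw [Matrix.mul_apply]
    have hterm : ‖(∑ l, W i l * (Φ - Φt) l k) * W⁻¹ k j‖ ≤ ε := by
      rw [norm_mul]
      have hsum : ‖∑ l, W i l * (Φ - Φt) l k‖ ≤ (p : ℝ) ^ (-v₁) * (p : ℝ) ^ (-N) := by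
        apply IsUltrametricDist.norm_sum_le_of_forall_le_of_nonneg
          (mul_nonneg (zpow_pos hp0 _).le (zpow_pos hp0 _).le)
        intro l _
        rw [norm_mul]
        exact mul_le_mul (hW1 i l) (hdiff l k) (norm_nonneg _) (zpow_pos hp0 _).le
      calc ‖∑ l, W i l * (Φ - Φt) l k‖ * ‖W⁻¹ k j‖
          ≤ ((p : ℝ) ^ (-v₁) * (p : ℝ) ^ (-N)) * (p : ℝ) ^ (-v₂) :=
            mul_le_mul hsum (hW2 k j) (norm_nonneg _)
              (mul_nonneg (zpow_pos hp0 _).le (zpow_pos hp0 _).le)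
        _ = (p : ℝ) ^ (-v₁ + -N + -v₂) := by
            rw [← zpow_add₀ (ne_of_gt hp0), ← zpow_add₀ (ne_of_gt hp0)]
        _ ≤ ε := zpow_le_zpow_right₀ hp1 (by omega)
    exact hterm
  have hB : ∀ i j, ‖(W * Φt * W⁻¹) i j‖ ≤ 1 := by
    intro i j
    have : (W * Φt * W⁻¹) i j
        = (W * Φ * W⁻¹) i j - ((W * Φ * W⁻¹) - (W * Φt * W⁻¹)) i j := by
      simp [Matrix.sub_apply]
    rw [this]
    exact (aux_norm_sub_le_max _ _).trans (max_le (hWΦ i j) ((hABdiff i j).trans hε1))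
  intro i _ _
  rw [hconj Φ, hconj Φt, ← Polynomial.coeff_sub]
  exact aux_det_diff_coeff_le _ _ ε hε0 hε1 hWΦ hB hABdiff i
end

section
/- Let p be a prime and d ≥ 2 with p ∤ d. For tuples u, v ∈ {0,...,d−2}^{n+1} with p(u_i+1) ≡ v_i+1 (mod d) for all i, and units a_0,...,a_n ∈ Z_p^×, define α_{u,v} = ∏_{i=0}^n a_i^{(p(u_i+1)−(v_i+1))/d} ( Σ_{m,r} (\frac{u_i+1}{d})_r Σ_{j=0}^r (p a_i^{p−1})^{r−j} / ((m−pj)! j!) ), where the sum is over integers m, r ≥ 0 with p(u_i+1) − (v_i+1) = d(m − pr). Then ord_p(α_{u,v}) ≥ 0. -/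
/-!
Every term of the double series already has norm at most `1`, so the ultrametric inequality
bounds the whole series (no summability is needed, a non-summable `tsum` being `0`). The
exponent `c = (p(u+1) - (v+1))/d` lies in `[0, p)`, so `v_p((c + pk)!) = v_p(k!) + k`; this
absorbs the factor `p^k`, the rising factorial `((u+1)/d)_{j+k}` is divisible by `(j+k)!`
because `(u+1)/d` is a `p`-adic integer, and `j! k!` divides `(j+k)!`.
-/

open Finset Nat

namespace Padic

variable {p : ℕ} [hp : Fact p.Prime]

lemma norm_natCast_le_one (n : ℕ) : ‖(n : ℚ_[p])‖ ≤ 1 := by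
  simpa using norm_int_le_one (p := p) n

lemma norm_natCast_le_of_dvd {m n : ℕ} (h : m ∣ n) : ‖(n : ℚ_[p])‖ ≤ ‖(m : ℚ_[p])‖ := by
  obtain ⟨t, rfl⟩ := h
  rw [Nat.cast_mul, norm_mul]
  exact mul_le_of_le_one_right (norm_nonneg _) (norm_natCast_le_one t)

lemma norm_prod_range_add_le_norm_factorial {x : ℚ_[p]} (hx : ‖x‖ ≤ 1) (r : ℕ) :
    ‖∏ t ∈ range r, (x + t)‖ ≤ ‖(r ! : ℚ_[p])‖ := by
  obtain ⟨y, rfl⟩ : ∃ y : ℤ_[p], (y : ℚ_[p]) = x := ⟨⟨x, hx⟩, rfl⟩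
  have hpoch : (((ascPochhammer ℤ_[p] r).eval y : ℤ_[p]) : ℚ_[p]) =
      ∏ t ∈ range r, ((y : ℚ_[p]) + t) := by
    induction r with
    | zero => simp
    | succ r ih => rw [ascPochhammer_succ_eval, PadicInt.coe_mul, ih, prod_range_succ]; simp
  rw [← hpoch]
  exact_mod_cast PadicInt.norm_ascPochhammer_le r y

lemma norm_factorial_mul_add (k : ℕ) {c : ℕ} (hc : c < p) :
    ‖((p * k + c) ! : ℚ_[p])‖ = ‖(p : ℚ_[p])‖ ^ k * ‖(k ! : ℚ_[p])‖ := by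
  have hval : padicValNat p (p * k + c)! = padicValNat p (p ^ k * k !) := by
    rw [padicValNat_factorial_mul_add k hc, padicValNat_factorial_mul,
      padicValNat.mul (pow_ne_zero _ hp.out.ne_zero) (factorial_ne_zero k),
      padicValNat.prime_pow, add_comm]
  rw [← norm_pow, ← norm_mul, ← Nat.cast_pow, ← Nat.cast_mul,
    norm_eq_zpow_neg_valuation (Nat.cast_ne_zero.mpr (factorial_ne_zero _)),
    norm_eq_zpow_neg_valuation (Nat.cast_ne_zero.mpr
      (mul_ne_zero (pow_ne_zero _ hp.out.ne_zero) (factorial_ne_zero k))),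
    valuation_natCast, valuation_natCast, hval]

lemma norm_factorial_add_le (j k : ℕ) :
    ‖((j + k) ! : ℚ_[p])‖ ≤ ‖(j ! : ℚ_[p])‖ * ‖(k ! : ℚ_[p])‖ := by
  rw [← norm_mul, ← Nat.cast_mul]
  exact norm_natCast_le_of_dvd (factorial_mul_factorial_dvd_factorial_add j k)

lemma norm_prod_range_add_mul_div_factorial_le_one {x a : ℚ_[p]} (hx : ‖x‖ ≤ 1) (ha : ‖a‖ = 1)
    {c : ℕ} (hc : c < p) (j k : ℕ) :
    ‖(∏ t ∈ range (j + k), (x + t)) *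
        (((p : ℚ_[p]) * a ^ (p - 1)) ^ k / (((p * k + c) ! : ℚ_[p]) * j !))‖ ≤ 1 := by
  have hj : 0 < ‖(j ! : ℚ_[p])‖ := norm_pos_iff.mpr (Nat.cast_ne_zero.mpr (factorial_ne_zero j))
  have hk : 0 < ‖(k ! : ℚ_[p])‖ := norm_pos_iff.mpr (Nat.cast_ne_zero.mpr (factorial_ne_zero k))
  have hpk : 0 < ‖(p : ℚ_[p])‖ ^ k := pow_pos (norm_pos_iff.mpr (by exact_mod_cast hp.out.ne_zero)) k
  rw [norm_mul, norm_div, norm_mul, norm_factorial_mul_add k hc, norm_pow, norm_mul, norm_pow, ha,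
    one_pow, mul_one]
  calc _ ≤ ‖(j ! : ℚ_[p])‖ * ‖(k ! : ℚ_[p])‖ *
        (‖(p : ℚ_[p])‖ ^ k / (‖(p : ℚ_[p])‖ ^ k * ‖(k ! : ℚ_[p])‖ * ‖(j ! : ℚ_[p])‖)) := by
        gcongr
        exact (norm_prod_range_add_le_norm_factorial hx _).trans (norm_factorial_add_le j k)
    _ = 1 := by field_simp

lemma norm_tsum_prod_range_add_mul_sum_le_one {x a : ℚ_[p]} (hx : ‖x‖ ≤ 1) (ha : ‖a‖ = 1)
    {c : ℕ} (hc : c < p) :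
    ‖∑' r : ℕ, (∏ t ∈ range r, (x + t)) *
        (if 0 ≤ (c : ℤ) + (p : ℤ) * r then
          ∑ j ∈ range (r + 1), ((p : ℚ_[p]) * a ^ (p - 1)) ^ (r - j) /
            (((((c : ℤ) + (p : ℤ) * r).toNat - p * j) ! : ℚ_[p]) * (j ! : ℚ_[p]))
        else 0)‖ ≤ 1 := by
  refine IsUltrametricDist.norm_tsum_le_of_forall_le_of_nonneg zero_le_one fun r => ?_
  rw [if_pos (by positivity), mul_sum]
  refine IsUltrametricDist.norm_sum_le_of_forall_le_of_nonneg zero_le_one fun j hj => ?_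
  obtain ⟨k, rfl⟩ := Nat.exists_eq_add_of_le (Nat.lt_succ_iff.mp (mem_range.mp hj))
  have hm : (c : ℤ) + p * (j + k : ℕ) = (p * j + (p * k + c) : ℕ) := by push_cast; ring
  rw [hm, Int.toNat_natCast, Nat.add_sub_cancel_left, Nat.add_sub_cancel_left]
  exact norm_prod_range_add_mul_div_factorial_le_one hx ha hc j k

end Padic

lemma exists_natCast_eq_ediv_lt {p d u v : ℕ} (hd : 2 ≤ d) (hu : u ≤ d - 2) (hv : v ≤ d - 2)
    (hdvd : (d : ℤ) ∣ p * (u + 1) - (v + 1)) :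
    ∃ c : ℕ, c < p ∧ ((p : ℤ) * (u + 1) - (v + 1)) / d = c := by
  obtain ⟨q, hq⟩ := hdvd
  rw [hq, Int.mul_ediv_cancel_left _ (by omega)]
  have hu' : (u : ℤ) + 2 ≤ d := by omega
  have hv' : (v : ℤ) + 2 ≤ d := by omega
  have hq0 : 0 ≤ q := by nlinarith
  have hqp : q < p := by nlinarith
  exact ⟨q.toNat, by omega, by omega⟩

/-- Integrality of the diagonal Frobenius entries: with `c_i = (p(u_i+1)-(v_i+1))/d`,
`α_{u,v} = ∏_i a_i^{c_i} (∑_{m,r ≥ 0, m - pr = c_i} ((u_i+1)/d)_r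
  ∑_{j=0}^r (p a_i^{p-1})^{r-j} / ((m-pj)! j!))`
satisfies `ord_p(α_{u,v}) ≥ 0`, i.e. `‖α_{u,v}‖ ≤ 1`.  The sum over the pairs `(m, r)`
with `m - pr = c_i` is written as a `tsum` over `r`, with `m = c_i + pr` when this is
nonnegative and the term being `0` otherwise. -/
theorem stmt_17 (p : ℕ) [hp : Fact p.Prime] (d n : ℕ) (hd : 2 ≤ d) (hpd : ¬ p ∣ d)
    (u v : Fin (n + 1) → ℕ) (hu : ∀ i, u i ≤ d - 2) (hv : ∀ i, v i ≤ d - 2)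
    (hcong : ∀ i, (d : ℤ) ∣ ((p : ℤ) * (u i + 1) - (v i + 1)))
    (a : Fin (n + 1) → ℚ_[p]) (ha : ∀ i, ‖a i‖ = 1) :
    ‖∏ i, (a i ^ (((p : ℤ) * (u i + 1) - (v i + 1)) / d)) *
        (∑' r : ℕ,
          (∏ t ∈ Finset.range r, ((u i + 1 : ℚ_[p]) / (d : ℚ_[p]) + (t : ℚ_[p]))) *
          (if 0 ≤ ((p : ℤ) * (u i + 1) - (v i + 1)) / d + (p : ℤ) * r then
            ∑ j ∈ Finset.range (r + 1),
              ((p : ℚ_[p]) * a i ^ (p - 1)) ^ (r - j) /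
                (((((((p : ℤ) * (u i + 1) - (v i + 1)) / d + (p : ℤ) * r).toNat
                    - p * j).factorial : ℚ_[p]) * (j.factorial : ℚ_[p])))
          else 0))‖ ≤ 1 := by
  rw [norm_prod]
  refine prod_le_one (fun i _ => norm_nonneg _) fun i _ => ?_
  obtain ⟨c, hcp, hc⟩ := exists_natCast_eq_ediv_lt hd (hu i) (hv i) (hcong i)
  have hx : ‖((u i + 1 : ℚ_[p]) / d)‖ ≤ 1 := by
    rw [norm_div, Padic.norm_natCast_eq_one_iff.mpr ((Nat.Prime.coprime_iff_not_dvd hp.out).mpr hpd),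
      div_one]
    exact_mod_cast Padic.norm_natCast_le_one (u i + 1)
  rw [norm_mul, norm_zpow, ha i, one_zpow, one_mul, hc]
  exact Padic.norm_tsum_prod_range_add_mul_sum_le_one hx (ha i) hcp
end
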